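/- arXiv:1702.05581 — 2 statements merged into one kernel-verified Lean document; each statement's English description precedes it below -/
import Mathlib

section
/- Suppose D is a distribution over S^{d-1} × {-1,+1} whose X-marginal is uniform on the unit sphere, and the η-bounded noise condition holds with respect to a unit vector u, i.e., for all x, P[Y ≠ sign(u·x) | X = x] ≤ η with η < 1/2. Then for any unit vector v, err(h_v) - err(h_u) ≥ (1 - 2η)·θ(v, u)/π, where err(h_w) = P[sign(w·X) ≠ Y] and θ(v,u) = arccos(v·u). -/
/-!
Let `A` be the region where `h_v` and `h_u` disagree. Off `A` the two classifiers err together,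
and on `A` exactly one of them errs, so `err(h_v) - err(h_u) = P[X ∈ A] - 2 P[Y ≠ h_u(X), X ∈ A]`;
bounded noise bounds the last probability by `η P[X ∈ A]`.

It remains to see that `P[X ∈ A] = θ/π`. Write `v = cos θ u + sin θ e` with `e ⟂ u`. The measure
of the wedge between `u` and `cos c u + sin c e` is additive in `c ∈ [0, π]`: rotation invariance
moves adjacent wedges onto each other, and they overlap only on the hyperplane `u⟂`. Being also
nonnegative and equal to `1` at `c = π`, it is `c/π`. Hyperplanes are null because a proper
subspace has countably many rotated copies, all of the same measure, which pairwise meet in a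
subspace of lower dimension, null by induction on the dimension.
-/

open MeasureTheory
open scoped RealInnerProductSpace

/-- The uniform (rotation-invariant) probability distribution on the unit sphere. -/
def IsUniformOnSphere {d : ℕ} (μ : Measure (EuclideanSpace ℝ (Fin d))) : Prop :=
  IsProbabilityMeasure μ ∧ μ {x | ‖x‖ = 1}ᶜ = 0 ∧
    ∀ f : EuclideanSpace ℝ (Fin d) ≃ₗᵢ[ℝ] EuclideanSpace ℝ (Fin d),
      Measure.map (⇑f) μ = μ

/-- `sign(t) = +1` if `t ≥ 0` and `-1` otherwise. -/
noncomputable def rsign (t : ℝ) : ℝ := if 0 ≤ t then 1 else -1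

open Set

lemma rsign_eq_one_or_eq_neg_one (t : ℝ) : rsign t = 1 ∨ rsign t = -1 := by
  unfold rsign; split_ifs <;> simp

lemma measurable_rsign : Measurable rsign :=
  Measurable.ite measurableSet_Ici measurable_const measurable_const

lemma rsign_eq_of_pos_combination {α β γ p q r : ℝ} (hα : 0 ≤ α) (hβ : 0 < β) (hγ : 0 < γ)
    (h : α * r = β * p + γ * q) (hp : p ≠ 0) (hpq : rsign p = rsign q) : rsign r = rsign p := by
  unfold rsign at *
  rcases hp.lt_or_gt with hp | hp
  · have hq : q < 0 := by by_contra! hq; simp [hq, hp.not_ge] at hpq; norm_num at hpq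
    have hr : r < 0 := by by_contra! hr; nlinarith [mul_nonneg hα hr]
    simp [hr.not_ge, hp.not_ge]
  · have hq : 0 ≤ q := by by_contra! hq; simp [hq.not_ge, hp.le] at hpq; norm_num at hpq
    have hr : 0 ≤ r := by by_contra! hr; nlinarith [mul_nonpos_of_nonneg_of_nonpos hα hr.le]
    simp [hr, hp.le]

section AdditiveOnIcc

variable {g : ℝ → ℝ} {L : ℝ}
  (hadd : ∀ a b, 0 ≤ a → 0 ≤ b → a + b ≤ L → g (a + b) = g a + g b)

include hadd

lemma apply_natCast_mul_of_add_on_Icc (k : ℕ) {s : ℝ} (hs : 0 ≤ s) (hks : k * s ≤ L) :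
    g (k * s) = k * g s := by
  induction k with
  | zero => simpa using hadd 0 0 le_rfl le_rfl (by simpa using hks)
  | succ k ih =>
    have hks' : k * s ≤ L := le_trans (by push_cast; nlinarith) hks
    rw [Nat.cast_succ, add_mul, one_mul,
      hadd _ _ (by positivity) hs (by push_cast at hks; linarith), ih hks']
    ring

lemma monotoneOn_of_add_on_Icc (hnonneg : ∀ x ∈ Icc 0 L, 0 ≤ g x) :
    MonotoneOn g (Icc 0 L) := by
  intro a ha b hb hab
  have h := hadd a (b - a) ha.1 (sub_nonneg.2 hab) (by linarith [hb.2])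
  rw [add_sub_cancel] at h
  linarith [hnonneg (b - a) ⟨sub_nonneg.2 hab, by linarith [ha.1, hb.2]⟩]

lemma abs_sub_div_mul_le_of_add_on_Icc (hnonneg : ∀ x ∈ Icc 0 L, 0 ≤ g x) (hL : 0 < L)
    {x : ℝ} (hx : x ∈ Icc 0 L) {n : ℕ} (hn : 0 < n) :
    |g x - x / L * g L| ≤ g L / n := by
  have hn' : (0 : ℝ) < n := Nat.cast_pos.2 hn
  set s := L / n
  have hs : 0 < s := by positivity
  have hsn : n * s = L := mul_div_cancel₀ L hn'.ne'
  have hgrid : ∀ k : ℕ, k ≤ n → g (k * s) = k / n * g L := by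
    intro k hk
    have hks : (k : ℝ) * s ≤ L := hsn ▸ by gcongr
    rw [apply_natCast_mul_of_add_on_Icc hadd k hs.le hks, ← hsn,
      apply_natCast_mul_of_add_on_Icc hadd n hs.le hsn.le]
    field_simp
  set t := x / s
  have hxt : x = t * s := (div_mul_cancel₀ x hs.ne').symm
  have hxL : x / L = t / n := by rw [hxt, ← hsn]; field_simp
  have ht : 0 ≤ t := div_nonneg hx.1 hs.le
  have hceil : ⌈t⌉₊ ≤ n := Nat.ceil_le.2 <| by
    rw [div_le_iff₀ hs, hsn]; exact hx.2
  have hmono := monotoneOn_of_add_on_Icc hadd hnonneg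
  have hlow : (⌊t⌋₊ / n : ℝ) * g L ≤ g x := by
    rw [← hgrid _ ((Nat.floor_le_ceil t).trans hceil)]
    exact hmono ⟨by positivity, le_trans (by rw [hxt]; gcongr; exact Nat.floor_le ht) hx.2⟩ hx
      (by rw [hxt]; gcongr; exact Nat.floor_le ht)
  have hhigh : g x ≤ (⌈t⌉₊ / n : ℝ) * g L := by
    rw [← hgrid _ hceil]
    exact hmono hx ⟨by positivity, hsn ▸ by gcongr⟩
      (by rw [hxt]; gcongr; exact Nat.le_ceil t)
  have hgL : 0 ≤ g L := hnonneg L ⟨hL.le, le_rfl⟩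
  have hfloor_t : (⌊t⌋₊ : ℝ) ≤ t := Nat.floor_le ht
  have ht_ceil : t ≤ ⌈t⌉₊ := Nat.le_ceil t
  have hceil_floor : (⌈t⌉₊ : ℝ) ≤ ⌊t⌋₊ + 1 := by exact_mod_cast Nat.ceil_le_floor_add_one t
  rw [hxL, abs_le]
  have hfloor_n : (⌊t⌋₊ / n : ℝ) * g L ≤ t / n * g L := by gcongr
  have hceil_n : t / n * g L ≤ (⌈t⌉₊ / n : ℝ) * g L := by gcongr
  have hgap : (⌈t⌉₊ / n : ℝ) * g L ≤ (⌊t⌋₊ / n : ℝ) * g L + g L / n := by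
    rw [div_mul_eq_mul_div, div_mul_eq_mul_div, ← add_div, div_le_div_iff_of_pos_right hn']
    nlinarith
  constructor <;> linarith

lemma eq_div_mul_of_add_on_Icc (hnonneg : ∀ x ∈ Icc 0 L, 0 ≤ g x) (hL : 0 < L)
    {x : ℝ} (hx : x ∈ Icc 0 L) : g x = x / L * g L := by
  have h : |g x - x / L * g L| ≤ 0 :=
    ge_of_tendsto (tendsto_const_div_atTop_nhds_zero_nat (g L)) <|
      Filter.eventually_atTop.2
        ⟨1, fun _ hn => abs_sub_div_mul_le_of_add_on_Icc hadd hnonneg hL hx hn⟩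
  rwa [abs_nonpos_iff, sub_eq_zero] at h

end AdditiveOnIcc

section PlaneRotation

variable {E : Type*} [NormedAddCommGroup E] [InnerProductSpace ℝ E]

noncomputable def greatCircle (u e : E) (t : ℝ) : E := Real.cos t • u + Real.sin t • e

lemma sin_add_smul_greatCircle (u e : E) (c c' : ℝ) :
    Real.sin (c + c') • greatCircle u e c =
      Real.sin c' • u + Real.sin c • greatCircle u e (c + c') := by
  have h := Real.sin_sq_add_cos_sq c
  simp only [greatCircle, Real.sin_add, Real.cos_add, smul_add, smul_smul]
  linear_combination (norm := module) (Real.sin c' * h) • u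

lemma exists_eq_greatCircle_arccos {u v : E} (hu : ‖u‖ = 1) (hv : ‖v‖ = 1)
    (hvu : |⟪v, u⟫| < 1) :
    ∃ e : E, ‖e‖ = 1 ∧ ⟪u, e⟫ = 0 ∧ v = greatCircle u e (Real.arccos ⟪v, u⟫) := by
  set t := ⟪v, u⟫
  set w := v - t • u
  have hw : ‖w‖ = Real.sin (Real.arccos t) := by
    have hw2 : ‖w‖ ^ 2 = 1 - t ^ 2 := by
      rw [norm_sub_sq_real, norm_smul, real_inner_smul_right, hu, hv,
        Real.norm_eq_abs, mul_one, sq_abs]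
      ring
    rw [Real.sin_arccos, ← hw2, Real.sqrt_sq (norm_nonneg w)]
  have hw0 : w ≠ 0 := by
    rw [← norm_ne_zero_iff, hw]
    exact (Real.sin_pos_of_pos_of_lt_pi (Real.arccos_pos.2 (abs_lt.1 hvu).2)
      (Real.arccos_lt_pi.2 (abs_lt.1 hvu).1)).ne'
  refine ⟨(‖w‖⁻¹ : ℝ) • w, norm_smul_inv_norm hw0, ?_, ?_⟩
  · rw [real_inner_smul_right, inner_sub_right, real_inner_smul_right, real_inner_comm,
      real_inner_self_eq_norm_sq, hu]
    ring
  · rw [greatCircle, Real.cos_arccos (abs_lt.1 hvu).1.le (abs_lt.1 hvu).2.le, ← hw, smul_smul,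
      mul_inv_cancel₀ (norm_ne_zero_iff.2 hw0), one_smul]
    exact (add_sub_cancel _ _).symm

lemma Submodule.exists_mem_norm_eq_one {K : Submodule ℝ E} (hK : K ≠ ⊥) :
    ∃ x ∈ K, ‖x‖ = 1 := by
  obtain ⟨x, hxK, hx⟩ := K.exists_mem_ne_zero_of_ne_bot hK
  exact ⟨(‖x‖⁻¹ : ℝ) • x, K.smul_mem _ hxK, norm_smul_inv_norm hx⟩

/-- Rotation by `θ` in the plane spanned by `u` and `e`, fixing its orthogonal complement
(for orthonormal `u`, `e`). -/
noncomputable def planeRotationLinearMap (u e : E) (θ : ℝ) : E →ₗ[ℝ] E where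
  toFun x := x + ((Real.cos θ - 1) * ⟪u, x⟫ - Real.sin θ * ⟪e, x⟫) • u
      + (Real.sin θ * ⟪u, x⟫ + (Real.cos θ - 1) * ⟪e, x⟫) • e
  map_add' x y := by
    simp only [inner_add_right]
    module
  map_smul' r x := by
    simp only [inner_smul_right, RingHom.id_apply]
    module

lemma planeRotationLinearMap_apply (u e : E) (θ : ℝ) (x : E) :
    planeRotationLinearMap u e θ x = x + ((Real.cos θ - 1) * ⟪u, x⟫ - Real.sin θ * ⟪e, x⟫) • u
      + (Real.sin θ * ⟪u, x⟫ + (Real.cos θ - 1) * ⟪e, x⟫) • e := rfl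

variable {u e : E}

lemma inner_planeRotationLinearMap (hu : ‖u‖ = 1) (he : ‖e‖ = 1) (hue : ⟪u, e⟫ = 0) (θ : ℝ)
    (x y : E) :
    ⟪planeRotationLinearMap u e θ x, planeRotationLinearMap u e θ y⟫ = ⟪x, y⟫ := by
  have huu : ⟪u, u⟫ = (1 : ℝ) := by rw [real_inner_self_eq_norm_sq, hu, one_pow]
  have hee : ⟪e, e⟫ = (1 : ℝ) := by rw [real_inner_self_eq_norm_sq, he, one_pow]
  have heu : ⟪e, u⟫ = (0 : ℝ) := by rw [real_inner_comm, hue]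
  simp only [planeRotationLinearMap_apply, inner_add_left, inner_add_right, real_inner_smul_left,
    real_inner_smul_right, huu, hee, hue, heu, real_inner_comm _ x]
  linear_combination (⟪u, x⟫ * ⟪u, y⟫ + ⟪e, x⟫ * ⟪e, y⟫) * Real.sin_sq_add_cos_sq θ

variable [FiniteDimensional ℝ E] (hu : ‖u‖ = 1) (he : ‖e‖ = 1) (hue : ⟪u, e⟫ = 0)

noncomputable def planeRotation (θ : ℝ) : E ≃ₗᵢ[ℝ] E :=
  ((planeRotationLinearMap u e θ).isometryOfInner
    (inner_planeRotationLinearMap hu he hue θ)).toLinearIsometryEquiv rfl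

lemma planeRotation_apply (θ : ℝ) (x : E) :
    planeRotation hu he hue θ x = planeRotationLinearMap u e θ x := rfl

lemma planeRotation_apply_of_inner_eq_zero (θ : ℝ) {x : E} (hux : ⟪u, x⟫ = 0)
    (hex : ⟪e, x⟫ = 0) :
    planeRotation hu he hue θ x = x := by
  simp [planeRotation_apply, planeRotationLinearMap_apply, hux, hex]

lemma planeRotation_left (θ : ℝ) : planeRotation hu he hue θ u = greatCircle u e θ := by
  have huu : ⟪u, u⟫ = (1 : ℝ) := by rw [real_inner_self_eq_norm_sq, hu, one_pow]
  have heu : ⟪e, u⟫ = (0 : ℝ) := by rw [real_inner_comm, hue]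
  rw [planeRotation_apply, planeRotationLinearMap_apply, huu, heu, greatCircle]
  module

lemma planeRotation_right (θ : ℝ) :
    planeRotation hu he hue θ e = -Real.sin θ • u + Real.cos θ • e := by
  have hee : ⟪e, e⟫ = (1 : ℝ) := by rw [real_inner_self_eq_norm_sq, he, one_pow]
  rw [planeRotation_apply, planeRotationLinearMap_apply, hue, hee]
  module

lemma planeRotation_greatCircle (θ c : ℝ) :
    planeRotation hu he hue θ (greatCircle u e c) = greatCircle u e (θ + c) := by
  rw [greatCircle, map_add, map_smul, map_smul, planeRotation_left, planeRotation_right,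
    greatCircle, greatCircle, Real.cos_add, Real.sin_add]
  module

lemma cos_mul_inner_eq_sin_mul_inner_of_mem_image {W : Submodule ℝ E} (heW : e ∈ Wᗮ)
    {θ : ℝ} {x : E} (hx : x ∈ planeRotation hu he hue θ '' W) :
    Real.cos θ * ⟪e, x⟫ = Real.sin θ * ⟪u, x⟫ := by
  obtain ⟨y, hyW, rfl⟩ := hx
  have h := (planeRotation hu he hue θ).inner_map_map e y
  rw [planeRotation_right, Submodule.inner_left_of_mem_orthogonal hyW heW, inner_add_left,
    real_inner_smul_left, real_inner_smul_left] at h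
  linarith

/-- The angles `arctan n` are chosen so that the rotated copy number `n` lies in the hyperplane
`⟪e, x⟫ = n ⟪u, x⟫`. -/
lemma image_planeRotation_arctan_inter_subset {W : Submodule ℝ E} (heW : e ∈ Wᗮ) {m n : ℕ}
    (hmn : m ≠ n) :
    planeRotation hu he hue (Real.arctan m) '' W ∩ planeRotation hu he hue (Real.arctan n) '' W ⊆
      ((ℝ ∙ u)ᗮ ⊓ W : Submodule ℝ E) := by
  have hinner (k : ℕ) {x} (hx : x ∈ planeRotation hu he hue (Real.arctan k) '' W) :
      ⟪e, x⟫ = k * ⟪u, x⟫ := by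
    have h := cos_mul_inner_eq_sin_mul_inner_of_mem_image hu he hue heW hx
    rw [Real.sin_arctan, Real.cos_arctan] at h
    field_simp at h
    linarith
  rintro x ⟨hxm, hxn⟩
  have hux : ⟪u, x⟫ = 0 := by
    by_contra h
    exact hmn (by exact_mod_cast mul_right_cancel₀ h ((hinner m hxm).symm.trans (hinner n hxn)))
  have hex : ⟪e, x⟫ = 0 := by rw [hinner m hxm, hux, mul_zero]
  obtain ⟨y, hyW, hyx⟩ := hxm
  have hxy : y = x := (planeRotation hu he hue _).injective <|
    hyx.trans (planeRotation_apply_of_inner_eq_zero hu he hue _ hux hex).symm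
  exact ⟨Submodule.mem_orthogonal_singleton_iff_inner_right.2 hux, hxy ▸ hyW⟩

end PlaneRotation

section SignDisagreement

variable {E : Type*} [NormedAddCommGroup E] [InnerProductSpace ℝ E]

def signDisagreement (a b : E) : Set E := {x | rsign ⟪a, x⟫ ≠ rsign ⟪b, x⟫}

lemma signDisagreement_comm (a b : E) : signDisagreement a b = signDisagreement b a := by
  ext x; exact ne_comm

lemma signDisagreement_self (a : E) : signDisagreement a a = ∅ := by
  ext x; simp [signDisagreement]

lemma signDisagreement_neg (a : E) : signDisagreement a (-a) = {x | ⟪a, x⟫ ≠ 0} := by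
  ext x
  simp only [signDisagreement, mem_ofPred_eq, inner_neg_left, rsign]
  rcases lt_trichotomy ⟪a, x⟫ 0 with h | h | h
  · simp [h.ne, h.not_ge, h.le]; norm_num
  · simp [h]
  · simp [h.ne', h.le, h.not_ge]; norm_num

lemma measurableSet_signDisagreement [MeasurableSpace E] [OpensMeasurableSpace E] (a b : E) :
    MeasurableSet (signDisagreement a b) :=
  (measurableSet_eq_fun (measurable_rsign.comp (continuous_const.inner continuous_id).measurable)
    (measurable_rsign.comp (continuous_const.inner continuous_id).measurable)).compl

lemma signDisagreement_map {F : Type*} [NormedAddCommGroup F] [InnerProductSpace ℝ F]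
    (f : E ≃ₗᵢ[ℝ] F) (a b : E) :
    signDisagreement (f a) (f b) = f.symm ⁻¹' signDisagreement a b := by
  ext x
  simp only [signDisagreement, mem_preimage, mem_ofPred_eq, ← f.inner_map_map, f.apply_symm_apply]

lemma signDisagreement_subset_union (a b c : E) :
    signDisagreement a c ⊆ signDisagreement a b ∪ signDisagreement b c := by
  intro x hac
  by_contra! h
  simp only [mem_union, signDisagreement, mem_ofPred_eq, not_or, not_not] at h
  exact hac (h.1.trans h.2)

lemma union_signDisagreement_subset (a b c : E) :
    signDisagreement a b ∪ signDisagreement b c ⊆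
      signDisagreement a c ∪ (signDisagreement a b ∩ signDisagreement b c) := by
  intro x hx
  by_cases hac : x ∈ signDisagreement a c
  · exact Or.inl hac
  simp only [mem_union, signDisagreement, mem_ofPred_eq, not_not] at hx hac
  rcases hx with hab | hbc
  · exact Or.inr ⟨hab, fun h => hab (hac.trans h.symm)⟩
  · exact Or.inr ⟨fun h => hbc (h.symm.trans hac), hbc⟩

lemma signDisagreement_inter_subset {a b c : E} {α β γ : ℝ} (hα : 0 ≤ α) (hβ : 0 < β)
    (hγ : 0 < γ) (hb : α • b = β • a + γ • c) :
    signDisagreement a b ∩ signDisagreement b c ⊆ {x | ⟪a, x⟫ = 0} := by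
  rintro x ⟨hab, hbc⟩
  by_contra hax
  have hac : rsign ⟪a, x⟫ = rsign ⟪c, x⟫ := by
    rcases rsign_eq_one_or_eq_neg_one ⟪a, x⟫ with h₁ | h₁ <;>
      rcases rsign_eq_one_or_eq_neg_one ⟪b, x⟫ with h₂ | h₂ <;>
      rcases rsign_eq_one_or_eq_neg_one ⟪c, x⟫ with h₃ | h₃ <;>
      simp_all [signDisagreement]
  have hcomb : α * ⟪b, x⟫ = β * ⟪a, x⟫ + γ * ⟪c, x⟫ := by
    rw [← real_inner_smul_left, hb, inner_add_left, real_inner_smul_left, real_inner_smul_left]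
  exact hab (rsign_eq_of_pos_combination hα hβ hγ hcomb hax hac).symm

end SignDisagreement

lemma measure_eq_zero_of_pairwise_measure_inter_eq_zero {α : Type*} [MeasurableSpace α]
    {μ : Measure α} [IsFiniteMeasure μ] {S : ℕ → Set α} (hS : ∀ n, NullMeasurableSet (S n) μ)
    (hinter : Pairwise fun m n => μ (S m ∩ S n) = 0) (hconst : ∀ n, μ (S n) = μ (S 0)) :
    μ (S 0) = 0 := by
  by_contra h
  have hunion := measure_iUnion₀ hinter hS
  simp only [hconst, ENNReal.tsum_const_eq_top_of_ne_zero h] at hunion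
  exact measure_ne_top μ _ hunion

namespace IsUniformOnSphere

variable {d : ℕ} {μ : Measure (EuclideanSpace ℝ (Fin d))}

lemma measure_preimage (hμ : IsUniformOnSphere μ)
    (f : EuclideanSpace ℝ (Fin d) ≃ₗᵢ[ℝ] EuclideanSpace ℝ (Fin d))
    {s : Set (EuclideanSpace ℝ (Fin d))} (hs : MeasurableSet s) : μ (f ⁻¹' s) = μ s := by
  rw [← Measure.map_apply f.continuous.measurable hs, hμ.2.2 f]

theorem measure_submodule_eq_zero (hμ : IsUniformOnSphere μ)
    {W : Submodule ℝ (EuclideanSpace ℝ (Fin d))} (hW : W ≠ ⊤) : μ W = 0 := by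
  have := hμ.1
  induction hk : Module.finrank ℝ W generalizing W with
  | zero =>
    rw [Submodule.finrank_eq_zero.1 hk, Submodule.bot_coe]
    exact measure_mono_null (by simp) hμ.2.1
  | succ k ih =>
    obtain ⟨w, hwW, hw⟩ := Submodule.exists_mem_norm_eq_one (K := W) (by rintro rfl; simp at hk)
    obtain ⟨a, haW, ha⟩ :=
      Submodule.exists_mem_norm_eq_one (Submodule.orthogonal_eq_bot_iff.not.2 hW)
    have hwa : ⟪w, a⟫ = 0 := Submodule.inner_right_of_mem_orthogonal hwW haW
    have hW' : μ ((ℝ ∙ w)ᗮ ⊓ W : Submodule ℝ _) = 0 := by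
      refine ih (fun h => hW (top_le_iff.1 (h ▸ inf_le_right))) ?_
      have := Submodule.finrank_add_inf_finrank_orthogonal
        ((Submodule.span_singleton_le_iff_mem w W).2 hwW)
      rw [finrank_span_singleton (by rintro rfl; simp at hw), hk] at this
      omega
    let R (n : ℕ) := planeRotation hw ha hwa (Real.arctan n)
    have hmeas (n : ℕ) : μ (R n '' W) = μ W := by
      rw [LinearIsometryEquiv.image_eq_preimage_symm,
        hμ.measure_preimage _ W.closed_of_finiteDimensional.measurableSet]
    rw [← hmeas 0]
    refine measure_eq_zero_of_pairwise_measure_inter_eq_zero (fun n => ?_)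
      (fun _ _ hmn =>
        measure_mono_null (image_planeRotation_arctan_inter_subset hw ha hwa haW hmn) hW')
      (fun n => (hmeas n).trans (hmeas 0).symm)
    rw [LinearIsometryEquiv.image_eq_preimage_symm]
    exact (W.closed_of_finiteDimensional.preimage (R n).symm.continuous).measurableSet
      |>.nullMeasurableSet

lemma measure_setOf_inner_eq_zero (hμ : IsUniformOnSphere μ) {b : EuclideanSpace ℝ (Fin d)}
    (hb : b ≠ 0) : μ {x | ⟪b, x⟫ = 0} = 0 := by
  have h : {x | ⟪b, x⟫ = 0} = ((ℝ ∙ b)ᗮ : Set (EuclideanSpace ℝ (Fin d))) := by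
    ext x; simp [Submodule.mem_orthogonal_singleton_iff_inner_right]
  rw [h]
  exact hμ.measure_submodule_eq_zero
    (by rwa [Ne, Submodule.orthogonal_eq_top_iff, Submodule.span_singleton_eq_bot])

lemma measure_signDisagreement_map (hμ : IsUniformOnSphere μ)
    (f : EuclideanSpace ℝ (Fin d) ≃ₗᵢ[ℝ] EuclideanSpace ℝ (Fin d))
    (a b : EuclideanSpace ℝ (Fin d)) :
    μ (signDisagreement (f a) (f b)) = μ (signDisagreement a b) := by
  rw [signDisagreement_map, hμ.measure_preimage _ (measurableSet_signDisagreement a b)]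

lemma measure_signDisagreement_neg (hμ : IsUniformOnSphere μ) {b : EuclideanSpace ℝ (Fin d)}
    (hb : b ≠ 0) : μ (signDisagreement b (-b)) = 1 := by
  have := hμ.1
  rw [signDisagreement_neg, ← compl_ofPred, prob_compl_eq_one_sub,
    hμ.measure_setOf_inner_eq_zero hb, tsub_zero]
  exact measurableSet_eq_fun (continuous_const.inner continuous_id).measurable measurable_const

section Wedge

variable {u e : EuclideanSpace ℝ (Fin d)}

/-- The rotation by `c` carries the wedge between `u` and the point at angle `c'` onto the wedge
between the points at angles `c` and `c + c'`, which meets the wedge between `u` and the point at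
angle `c` only on `u⟂`. -/
lemma measure_signDisagreement_greatCircle_add (hμ : IsUniformOnSphere μ) (hu : ‖u‖ = 1)
    (he : ‖e‖ = 1) (hue : ⟪u, e⟫ = 0) {c c' : ℝ}
    (hc : 0 ≤ c) (hc' : 0 ≤ c') (hcc : c + c' ≤ Real.pi) :
    μ (signDisagreement u (greatCircle u e (c + c'))) =
      μ (signDisagreement u (greatCircle u e c)) +
        μ (signDisagreement u (greatCircle u e c')) := by
  rcases hc.eq_or_lt with rfl | hc
  · simp [greatCircle, signDisagreement_self]
  rcases hc'.eq_or_lt with rfl | hc'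
  · simp [greatCircle, signDisagreement_self]
  set v₁ := greatCircle u e c
  set v₂ := greatCircle u e (c + c')
  have hrot : μ (signDisagreement v₁ v₂) = μ (signDisagreement u (greatCircle u e c')) := by
    have h₁ : planeRotation hu he hue c u = v₁ := planeRotation_left hu he hue c
    have h₂ : planeRotation hu he hue c (greatCircle u e c') = v₂ :=
      planeRotation_greatCircle hu he hue c c'
    rw [← h₁, ← h₂, hμ.measure_signDisagreement_map]
  have hnull : μ (signDisagreement u v₁ ∩ signDisagreement v₁ v₂) = 0 :=
    measure_mono_null
      (signDisagreement_inter_subset (Real.sin_nonneg_of_nonneg_of_le_pi (by positivity) hcc)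
        (Real.sin_pos_of_pos_of_lt_pi hc' (by linarith))
        (Real.sin_pos_of_pos_of_lt_pi hc (by linarith)) (sin_add_smul_greatCircle u e c c'))
      (hμ.measure_setOf_inner_eq_zero (by rintro rfl; simp at hu))
  rw [← hrot, ← measure_union₀ (measurableSet_signDisagreement _ _).nullMeasurableSet hnull]
  refine le_antisymm (measure_mono (signDisagreement_subset_union _ _ _)) ?_
  calc _ ≤ μ (signDisagreement u v₂ ∪ (signDisagreement u v₁ ∩ signDisagreement v₁ v₂)) :=
        measure_mono (union_signDisagreement_subset _ _ _)
    _ ≤ μ (signDisagreement u v₂) := (measure_union_le _ _).trans (by rw [hnull, add_zero])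

lemma measureReal_signDisagreement_greatCircle (hμ : IsUniformOnSphere μ) (hu : ‖u‖ = 1)
    (he : ‖e‖ = 1) (hue : ⟪u, e⟫ = 0) {θ : ℝ} (hθ : θ ∈ Icc 0 Real.pi) :
    μ.real (signDisagreement u (greatCircle u e θ)) = θ / Real.pi := by
  have := hμ.1
  have hadd (c c' : ℝ) (hc : 0 ≤ c) (hc' : 0 ≤ c') (hcc : c + c' ≤ Real.pi) :
      μ.real (signDisagreement u (greatCircle u e (c + c'))) =
        μ.real (signDisagreement u (greatCircle u e c)) +
          μ.real (signDisagreement u (greatCircle u e c')) := by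
    simp only [Measure.real, hμ.measure_signDisagreement_greatCircle_add hu he hue hc hc' hcc,
      ENNReal.toReal_add (measure_ne_top _ _) (measure_ne_top _ _)]
  rw [eq_div_mul_of_add_on_Icc (g := fun c => μ.real (signDisagreement u (greatCircle u e c)))
    hadd (fun _ _ => measureReal_nonneg) Real.pi_pos hθ]
  simp [greatCircle, Measure.real,
    hμ.measure_signDisagreement_neg (show u ≠ 0 by rintro rfl; simp at hu)]

end Wedge

theorem measureReal_signDisagreement (hμ : IsUniformOnSphere μ) {u v : EuclideanSpace ℝ (Fin d)}
    (hu : ‖u‖ = 1) (hv : ‖v‖ = 1) :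
    μ.real (signDisagreement v u) = Real.arccos ⟪v, u⟫ / Real.pi := by
  have habs : |⟪v, u⟫| ≤ 1 := by simpa [hu, hv] using abs_real_inner_le_norm v u
  rcases habs.lt_or_eq with hlt | heq
  · obtain ⟨e, he, hue, hve⟩ := exists_eq_greatCircle_arccos hu hv hlt
    calc μ.real (signDisagreement v u)
        = μ.real (signDisagreement u (greatCircle u e (Real.arccos ⟪v, u⟫))) := by
          rw [signDisagreement_comm, ← hve]
      _ = _ := hμ.measureReal_signDisagreement_greatCircle hu he hue
          ⟨Real.arccos_nonneg _, Real.arccos_le_pi _⟩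
  rcases abs_eq_abs.1 (heq.trans abs_one.symm) with h | h
  · obtain rfl := (inner_eq_one_iff_of_norm_eq_one hv hu).1 h
    simp [hv, signDisagreement_self]
  · obtain rfl := (inner_eq_neg_one_iff_of_norm_eq_one hv hu).1 h
    rw [h, Real.arccos_neg_one, div_self Real.pi_ne_zero, signDisagreement_comm, Measure.real,
      hμ.measure_signDisagreement_neg (by rintro rfl; simp at hu), ENNReal.toReal_one]

end IsUniformOnSphere

lemma measureReal_ne_sub_measureReal_ne {Ω : Type*} [MeasurableSpace Ω] {P : Measure Ω}
    [IsFiniteMeasure P] {f g Y : Ω → ℝ} (hf : Measurable f) (hg : Measurable g)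
    (hY : Measurable Y) (hfv : ∀ ω, f ω = 1 ∨ f ω = -1) (hgv : ∀ ω, g ω = 1 ∨ g ω = -1)
    (hYv : ∀ᵐ ω ∂P, Y ω = 1 ∨ Y ω = -1) :
    P.real {ω | f ω ≠ Y ω} - P.real {ω | g ω ≠ Y ω} =
      P.real {ω | f ω ≠ g ω} - 2 * P.real {ω | Y ω ≠ g ω ∧ f ω ≠ g ω} := by
  set D := {ω | f ω ≠ g ω}
  set Eg := {ω | Y ω ≠ g ω}
  have hD : MeasurableSet D := (measurableSet_eq_fun hf hg).compl
  have hEg : MeasurableSet Eg := (measurableSet_eq_fun hY hg).compl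
  have hg_comm : {ω | g ω ≠ Y ω} = Eg := by simp_rw [Eg, ne_comm]
  have hoff : {ω | f ω ≠ Y ω} \ D = Eg \ D := by
    ext ω
    simp only [D, Eg, mem_sdiff, mem_ofPred_eq, not_not]
    exact ⟨fun ⟨h, hfg⟩ => ⟨hfg ▸ Ne.symm h, hfg⟩, fun ⟨h, hfg⟩ => ⟨hfg ▸ Ne.symm h, hfg⟩⟩
  have hon : ({ω | f ω ≠ Y ω} ∩ D : Set Ω) =ᵐ[P] (D \ Eg : Set Ω) := by
    filter_upwards [hYv] with ω hYω
    change (f ω ≠ Y ω ∧ f ω ≠ g ω) = (f ω ≠ g ω ∧ ¬Y ω ≠ g ω)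
    rcases hfv ω with hf | hf <;> rcases hgv ω with hg | hg <;> rcases hYω with hY | hY <;>
      simp [hf, hg, hY]
  have hf_split := measureReal_inter_add_sdiff (μ := P) (s := {ω | f ω ≠ Y ω}) hD
  have hg_split := measureReal_inter_add_sdiff (μ := P) (s := Eg) hD
  have hD_split := measureReal_inter_add_sdiff (μ := P) (s := D) hEg
  rw [measureReal_congr hon, hoff] at hf_split
  rw [inter_comm D Eg] at hD_split
  rw [hg_comm]
  change _ = _ - 2 * P.real (Eg ∩ D)
  linarith

theorem stmt_8_general {d : ℕ} {Ω : Type*} [MeasurableSpace Ω]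
    (P : Measure Ω) [IsProbabilityMeasure P]
    (X : Ω → EuclideanSpace ℝ (Fin d)) (Y : Ω → ℝ)
    (hX : Measurable X) (hY : Measurable Y)
    (hunif : IsUniformOnSphere (P.map X))
    (hYval : ∀ᵐ ω ∂P, Y ω = 1 ∨ Y ω = -1)
    (u : EuclideanSpace ℝ (Fin d)) (hu : ‖u‖ = 1)
    (η : ℝ) (hη0 : 0 ≤ η)
    -- η-bounded noise: for every (measurable) event `{X ∈ A}`, the probability of a
    -- flipped label within it is at most `η · P[X ∈ A]` (this is the integrated form of
    -- `P[Y ≠ sign(u·x) | X = x] ≤ η` for all `x`).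
    (hnoise : ∀ A : Set (EuclideanSpace ℝ (Fin d)), MeasurableSet A →
      P {ω | Y ω ≠ rsign ⟪u, X ω⟫ ∧ X ω ∈ A} ≤ ENNReal.ofReal η * P {ω | X ω ∈ A})
    (v : EuclideanSpace ℝ (Fin d)) (hv : ‖v‖ = 1) :
    (P {ω | rsign ⟪v, X ω⟫ ≠ Y ω}).toReal - (P {ω | rsign ⟪u, X ω⟫ ≠ Y ω}).toReal ≥
      (1 - 2 * η) * (Real.arccos ⟪v, u⟫ / Real.pi) := by
  set A := signDisagreement v u
  have hA : MeasurableSet A := measurableSet_signDisagreement v u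
  have hsign (w : EuclideanSpace ℝ (Fin d)) : Measurable fun ω => rsign ⟪w, X ω⟫ :=
    measurable_rsign.comp ((continuous_const.inner continuous_id).measurable.comp hX)
  have hangle : P.real (X ⁻¹' A) = Real.arccos ⟪v, u⟫ / Real.pi := by
    rw [← map_measureReal_apply hX hA]
    exact hunif.measureReal_signDisagreement hu hv
  have hflip : P.real {ω | Y ω ≠ rsign ⟪u, X ω⟫ ∧ X ω ∈ A} ≤ η * P.real (X ⁻¹' A) := by
    have h := ENNReal.toReal_mono (by finiteness) (hnoise A hA)
    rwa [ENNReal.toReal_mul, ENNReal.toReal_ofReal hη0] at h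
  simp only [← measureReal_def]
  rw [measureReal_ne_sub_measureReal_ne (hsign v) (hsign u) hY
    (fun _ => rsign_eq_one_or_eq_neg_one _) (fun _ => rsign_eq_one_or_eq_neg_one _) hYval]
  change _ ≤ P.real (X ⁻¹' A) - 2 * P.real {ω | Y ω ≠ rsign ⟪u, X ω⟫ ∧ X ω ∈ A}
  rw [← hangle]
  linarith

theorem stmt_8 {d : ℕ} (hd : 2 ≤ d) {Ω : Type*} [MeasurableSpace Ω]
    (P : Measure Ω) [IsProbabilityMeasure P]
    (X : Ω → EuclideanSpace ℝ (Fin d)) (Y : Ω → ℝ)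
    (hX : Measurable X) (hY : Measurable Y)
    (hunif : IsUniformOnSphere (P.map X))
    (hYval : ∀ᵐ ω ∂P, Y ω = 1 ∨ Y ω = -1)
    (u : EuclideanSpace ℝ (Fin d)) (hu : ‖u‖ = 1)
    (η : ℝ) (hη0 : 0 ≤ η) (hη : η < 1 / 2)
    -- η-bounded noise: for every (measurable) event `{X ∈ A}`, the probability of a
    -- flipped label within it is at most `η · P[X ∈ A]` (this is the integrated form of
    -- `P[Y ≠ sign(u·x) | X = x] ≤ η` for all `x`).
    (hnoise : ∀ A : Set (EuclideanSpace ℝ (Fin d)), MeasurableSet A →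
      P {ω | Y ω ≠ rsign ⟪u, X ω⟫ ∧ X ω ∈ A} ≤ ENNReal.ofReal η * P {ω | X ω ∈ A})
    (v : EuclideanSpace ℝ (Fin d)) (hv : ‖v‖ = 1) :
    (P {ω | rsign ⟪v, X ω⟫ ≠ Y ω}).toReal - (P {ω | rsign ⟪u, X ω⟫ ≠ Y ω}).toReal ≥
      (1 - 2 * η) * (Real.arccos ⟪v, u⟫ / Real.pi) :=
  stmt_8_general P X Y hX hY hunif hYval u hu η hη0 hnoise v hv
end

section
/- Let u, v be unit vectors in ℝ^d (d ≥ 4) with angle θ = arccos(u·v) ∈ [0, 9π/10], and 0 ≤ ξ ≤ θ/(4√d). Let x be uniform on {x ∈ S^{d-1} : v · x = ξ}. Then E[(u · x)·𝟙{u · x < 0}] ≤ ξ - θ/(36√d). -/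
/-!
Write `u = cos θ • v + sin θ • w` with `w` a unit vector orthogonal to `v`. On the slice
`⟪u, x⟫ = ξ cos θ + sin θ ⟪w, x⟫`, so `min ⟪u, x⟫ 0 ≤ ξ + sin θ · min ⟪w, x⟫ 0`, and the
reflection `w ↦ -w` gives `E[min ⟪w, x⟫ 0] = -E|⟪w, x⟫| / 2`.

Isometries fixing `v` make the law of `⟪a, x⟫` the same for all unit `a ⊥ v`. Summing over an
orthonormal basis of `v^⊥` (Parseval on the slice) gives `E⟪w, x⟫² = (1 - ξ²) / (d - 1)`, and,
comparing `a₁ ± a₂` with `√2 a₁`, `E⟪w, x⟫⁴ = 3 (1 - ξ²)² / (d² - 1)`. The pointwise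
inequality `3 s² z² ≤ 2 s³ |z| + z⁴` turns these two moments into `E|⟪w, x⟫| ≥ π / (6 √d)`,
and concavity of `sin` gives `sin θ ≥ θ / (3π)` on `[0, 9π/10]`.
-/

open MeasureTheory
open scoped RealInnerProductSpace

/-- The uniform probability distribution on the slice `{x ∈ S^{d-1} : v·x = ξ}`:
a probability measure concentrated on the slice that is invariant under every
linear isometry of `ℝ^d` fixing `v`. -/
def IsUniformOnSlice {d : ℕ} (v : EuclideanSpace ℝ (Fin d)) (ξ : ℝ)
    (μ : Measure (EuclideanSpace ℝ (Fin d))) : Prop :=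
  IsProbabilityMeasure μ ∧ μ {x | ‖x‖ = 1 ∧ ⟪v, x⟫ = ξ}ᶜ = 0 ∧
    ∀ f : EuclideanSpace ℝ (Fin d) ≃ₗᵢ[ℝ] EuclideanSpace ℝ (Fin d),
      f v = v → Measure.map (⇑f) μ = μ


open Real

lemma div_three_pi_mul_le_sin {θ : ℝ} (h₀ : 0 ≤ θ) (h₁ : θ ≤ 9 * π / 10) :
    θ / (3 * π) ≤ sin θ := by
  have hsin : 3 / 10 < sin (9 * π / 10) := by
    rw [show 9 * π / 10 = π - π / 10 by ring, sin_pi_sub]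
    have hcube : (π / 10) ^ 3 < 32 / 1000 := by
      calc (π / 10) ^ 3 < (315 / 1000) ^ 3 :=
            pow_lt_pow_left₀ (by linarith [pi_lt_d2]) (by positivity) (by norm_num)
        _ < 32 / 1000 := by norm_num
    linarith [sin_gt_sub_cube (x := π / 10) (by positivity), pi_gt_d2]
  obtain ⟨t, rfl⟩ : ∃ t, θ = t * (9 * π / 10) := ⟨θ / (9 * π / 10), by field_simp⟩
  have ht₀ : 0 ≤ t := nonneg_of_mul_nonneg_left h₀ (by positivity)
  have ht₁ : t ≤ 1 := by nlinarith [pi_pos]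
  have hchord : (1 - t) * sin 0 + t * sin (9 * π / 10) ≤ sin ((1 - t) * 0 + t * (9 * π / 10)) :=
    strictConcaveOn_sin_Icc.concaveOn.2 ⟨le_rfl, pi_pos.le⟩
      ⟨by positivity, by linarith [pi_pos]⟩ (sub_nonneg.2 ht₁) ht₀ (by ring)
  simp only [sin_zero, mul_zero, zero_add] at hchord
  calc t * (9 * π / 10) / (3 * π) = t * (3 / 10) := by field_simp; ring
    _ ≤ t * sin (9 * π / 10) := by gcongr
    _ ≤ _ := hchord

lemma three_mul_sq_mul_sq_le (s z : ℝ) (hs : 0 ≤ s) :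
    3 * s ^ 2 * z ^ 2 ≤ 2 * s ^ 3 * |z| + z ^ 4 := by
  have key : 0 ≤ |z| * (|z| - s) ^ 2 * (|z| + 2 * s) := by positivity
  rw [show |z| * (|z| - s) ^ 2 * (|z| + 2 * s) = |z| ^ 4 - 3 * s ^ 2 * |z| ^ 2 + 2 * s ^ 3 * |z|
    by ring, Even.pow_abs (by decide), sq_abs] at key
  linarith

lemma three_mul_sq_mul_integral_sq_le {α : Type*} [MeasurableSpace α] {μ : Measure α}
    {Z : α → ℝ} (h₁ : Integrable (fun x ↦ |Z x|) μ) (h₂ : Integrable (fun x ↦ Z x ^ 2) μ)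
    (h₄ : Integrable (fun x ↦ Z x ^ 4) μ) {s : ℝ} (hs : 0 ≤ s) :
    3 * s ^ 2 * ∫ x, Z x ^ 2 ∂μ ≤ 2 * s ^ 3 * ∫ x, |Z x| ∂μ + ∫ x, Z x ^ 4 ∂μ := by
  rw [← integral_const_mul, ← integral_const_mul, ← integral_add (h₁.const_mul _) h₄]
  exact integral_mono (h₂.const_mul _) ((h₁.const_mul _).add h₄)
    fun x ↦ three_mul_sq_mul_sq_le s (Z x) hs

section Geometry

variable {E : Type*} [NormedAddCommGroup E] [InnerProductSpace ℝ E]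

lemma exists_linearIsometryEquiv_fix_apply_eq [FiniteDimensional ℝ E] {v a b : E}
    (hab : ‖a‖ = ‖b‖) (ha : ⟪v, a⟫ = 0) (hb : ⟪v, b⟫ = 0) :
    ∃ f : E ≃ₗᵢ[ℝ] E, f v = v ∧ f a = b := by
  refine ⟨(ℝ ∙ (a - b))ᗮ.reflection, ?_, Submodule.reflection_sub hab⟩
  apply Submodule.reflection_mem_subspace_eq_self
  rw [Submodule.mem_orthogonal_singleton_iff_inner_right, inner_sub_left, real_inner_comm,
    ha, real_inner_comm, hb, sub_zero]

lemma exists_norm_eq_one_inner_eq_zero [FiniteDimensional ℝ E] (hE : 2 ≤ Module.finrank ℝ E)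
    (v : E) : ∃ w : E, ‖w‖ = 1 ∧ ⟪v, w⟫ = 0 := by
  have hK : 0 < Module.finrank ℝ (ℝ ∙ v)ᗮ := by
    have := Submodule.finrank_add_finrank_orthogonal (ℝ ∙ v)
    have : Module.finrank ℝ (ℝ ∙ v) ≤ 1 := (finrank_span_le_card ({v} : Set E)).trans (by simp)
    omega
  obtain ⟨y, hy⟩ := Module.finrank_pos_iff_exists_ne_zero.1 hK
  refine ⟨‖(y : E)‖⁻¹ • (y : E), norm_smul_inv_norm (by simpa using hy), ?_⟩
  rw [inner_smul_right, Submodule.mem_orthogonal_singleton_iff_inner_right.1 y.2, mul_zero]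

lemma exists_eq_inner_smul_add_sqrt_smul [FiniteDimensional ℝ E]
    (hE : 2 ≤ Module.finrank ℝ E) {u v : E} (hu : ‖u‖ = 1) (hv : ‖v‖ = 1) :
    ∃ w : E, ‖w‖ = 1 ∧ ⟪v, w⟫ = 0 ∧ u = ⟪u, v⟫ • v + √(1 - ⟪u, v⟫ ^ 2) • w := by
  set y := u - ⟪u, v⟫ • v
  have hvy : ⟪v, y⟫ = 0 := by
    simp [y, inner_sub_right, inner_smul_right, hv, real_inner_comm]
  have hy : ‖y‖ = √(1 - ⟪u, v⟫ ^ 2) := by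
    rw [← Real.sqrt_sq (norm_nonneg y), norm_sub_sq_real, real_inner_smul_right, norm_smul,
      hu, hv, Real.norm_eq_abs, mul_one, sq_abs]
    ring_nf
  obtain ⟨w, hw, hvw, hyw⟩ : ∃ w : E, ‖w‖ = 1 ∧ ⟪v, w⟫ = 0 ∧ y = ‖y‖ • w := by
    by_cases hy0 : y = 0
    · obtain ⟨w, hw, hvw⟩ := exists_norm_eq_one_inner_eq_zero hE v
      exact ⟨w, hw, hvw, by simp [hy0]⟩
    · exact ⟨‖y‖⁻¹ • y, norm_smul_inv_norm hy0, by rw [inner_smul_right, hvy, mul_zero],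
        (smul_inv_smul₀ (norm_ne_zero_iff.2 hy0) y).symm⟩
  refine ⟨w, hw, hvw, ?_⟩
  rw [← hy, ← hyw, add_sub_cancel]

end Geometry

namespace IsUniformOnSlice

variable {d : ℕ} {v : EuclideanSpace ℝ (Fin d)} {ξ : ℝ} {μ : Measure (EuclideanSpace ℝ (Fin d))}

lemma ae_mem (hμ : IsUniformOnSlice v ξ μ) : ∀ᵐ x ∂μ, ‖x‖ = 1 ∧ ⟪v, x⟫ = ξ :=
  ae_iff.2 hμ.2.1

lemma integrable (hμ : IsUniformOnSlice v ξ μ) {F : EuclideanSpace ℝ (Fin d) → ℝ}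
    (hF : Continuous F) : Integrable F μ := by
  have := hμ.1
  rw [← Measure.restrict_eq_self_of_ae_mem (s := Metric.sphere 0 1)
    (hμ.ae_mem.mono fun x hx ↦ by simpa using hx.1)]
  exact hF.continuousOn.integrableOn_compact (isCompact_sphere 0 1)

lemma integral_comp_inner_eq (hμ : IsUniformOnSlice v ξ μ) {a b : EuclideanSpace ℝ (Fin d)}
    (hab : ‖a‖ = ‖b‖) (ha : ⟪v, a⟫ = 0) (hb : ⟪v, b⟫ = 0) (g : ℝ → ℝ) :
    ∫ x, g ⟪a, x⟫ ∂μ = ∫ x, g ⟪b, x⟫ ∂μ := by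
  obtain ⟨f, hfv, hfa⟩ := exists_linearIsometryEquiv_fix_apply_eq hab ha hb
  calc ∫ x, g ⟪a, x⟫ ∂μ = ∫ x, g ⟪b, f.toMeasurableEquiv x⟫ ∂μ := by
        simp [← hfa, f.inner_map_map]
    _ = ∫ x, g ⟪b, x⟫ ∂μ.map f := (integral_map_equiv f.toMeasurableEquiv fun x ↦ g ⟪b, x⟫).symm
    _ = ∫ x, g ⟪b, x⟫ ∂μ := by rw [hμ.2.2 f hfv]

lemma integral_inner_pow (hμ : IsUniformOnSlice v ξ μ) {w a : EuclideanSpace ℝ (Fin d)}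
    (hw : ‖w‖ = 1) (hvw : ⟪v, w⟫ = 0) (ha : ⟪v, a⟫ = 0) (k : ℕ) :
    ∫ x, ⟪a, x⟫ ^ k ∂μ = ‖a‖ ^ k * ∫ x, ⟪w, x⟫ ^ k ∂μ := by
  rw [hμ.integral_comp_inner_eq (b := ‖a‖ • w) (by rw [norm_smul, hw, norm_norm, mul_one]) ha
    (by rw [inner_smul_right, hvw, mul_zero]) (· ^ k), ← integral_const_mul]
  simp [real_inner_smul_left, mul_pow]

lemma integral_min_inner_zero (hμ : IsUniformOnSlice v ξ μ) {w : EuclideanSpace ℝ (Fin d)}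
    (hvw : ⟪v, w⟫ = 0) : ∫ x, min ⟪w, x⟫ 0 ∂μ = -(∫ x, |⟪w, x⟫| ∂μ) / 2 := by
  have hflip := hμ.integral_comp_inner_eq (norm_neg w).symm hvw
    (by rw [inner_neg_right, hvw, neg_zero]) (min · 0)
  have hsum : ∀ t : ℝ, min t 0 + min (-t) 0 = -|t| := fun t ↦ by
    rcases le_total t 0 with ht | ht
    · simp [ht, abs_of_nonpos ht]
    · simp [ht, abs_of_nonneg ht]
  simp only [inner_neg_left] at hflip
  have := integral_add (μ := μ) (f := fun x ↦ min ⟪w, x⟫ 0) (g := fun x ↦ min (-⟪w, x⟫) 0)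
    (hμ.integrable (by fun_prop)) (hμ.integrable (by fun_prop))
  simp only [hsum, integral_neg, ← hflip] at this
  linarith

lemma three_mul_integral_sq_mul_sq (hμ : IsUniformOnSlice v ξ μ)
    {w a₁ a₂ : EuclideanSpace ℝ (Fin d)} (hw : ‖w‖ = 1) (hvw : ⟪v, w⟫ = 0)
    (ha₁ : ‖a₁‖ = 1) (ha₂ : ‖a₂‖ = 1) (h₁₂ : ⟪a₁, a₂⟫ = 0) (hva₁ : ⟪v, a₁⟫ = 0)
    (hva₂ : ⟪v, a₂⟫ = 0) :
    3 * ∫ x, ⟪a₁, x⟫ ^ 2 * ⟪a₂, x⟫ ^ 2 ∂μ = ∫ x, ⟪w, x⟫ ^ 4 ∂μ := by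
  have hI : ∀ {F : EuclideanSpace ℝ (Fin d) → ℝ}, Continuous F → Integrable F μ := hμ.integrable
  have hmoment := fun a (ha : ⟪v, a⟫ = 0) ↦ hμ.integral_inner_pow hw hvw ha 4
  have hadd : ‖a₁ + a₂‖ ^ 4 = 4 := by
    rw [show 4 = 2 * 2 by rfl, pow_mul, norm_add_sq_real, ha₁, ha₂, h₁₂]; norm_num
  have hsub : ‖a₁ - a₂‖ ^ 4 = 4 := by
    rw [show 4 = 2 * 2 by rfl, pow_mul, norm_sub_sq_real, ha₁, ha₂, h₁₂]; norm_num
  have hexpand : ∀ x, ⟪a₁ + a₂, x⟫ ^ 4 + ⟪a₁ - a₂, x⟫ ^ 4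
      = 2 * ⟪a₁, x⟫ ^ 4 + 2 * ⟪a₂, x⟫ ^ 4 + 12 * (⟪a₁, x⟫ ^ 2 * ⟪a₂, x⟫ ^ 2) := fun x ↦ by
    rw [inner_add_left, inner_sub_left]; ring
  have key := integral_congr_ae (μ := μ) (Filter.Eventually.of_forall hexpand)
  rw [integral_add (hI (by fun_prop)) (hI (by fun_prop)),
    integral_add (hI (by fun_prop)) (hI (by fun_prop)),
    integral_add (hI (by fun_prop)) (hI (by fun_prop)), integral_const_mul, integral_const_mul,
    integral_const_mul, hmoment (a₁ + a₂) (by simp [inner_add_right, hva₁, hva₂]),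
    hmoment (a₁ - a₂) (by simp [inner_sub_right, hva₁, hva₂]), hmoment a₁ hva₁, hmoment a₂ hva₂,
    hadd, hsub, ha₁, ha₂] at key
  linarith

lemma exists_orthonormalBasis_sum_inner_sq (hμ : IsUniformOnSlice v ξ μ) (hv : ‖v‖ = 1) :
    ∃ (b : OrthonormalBasis (Fin d) ℝ (EuclideanSpace ℝ (Fin d))) (A : Finset (Fin d)),
      (A.card : ℝ) = d - 1 ∧ (∀ i ∈ A, ⟪v, b i⟫ = 0) ∧
        ∀ᵐ x ∂μ, ∑ i ∈ A, ⟪b i, x⟫ ^ 2 = 1 - ξ ^ 2 := by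
  have : NeZero d := ⟨by rintro rfl; simp [Subsingleton.elim v 0] at hv⟩
  have hv' : Orthonormal ℝ (({0} : Set (Fin d)).domRestrict fun _ ↦ v) :=
    ⟨fun _ ↦ hv, fun i j hij ↦ (hij (Subsingleton.elim i j)).elim⟩
  obtain ⟨b, hb⟩ := hv'.exists_orthonormalBasis_extension_of_card_eq (by simp)
  have hb0 : b 0 = v := hb 0 rfl
  refine ⟨b, Finset.univ.erase 0, ?_, fun i hi ↦ ?_, hμ.ae_mem.mono fun x hx ↦ ?_⟩
  · rw [Finset.card_erase_of_mem (Finset.mem_univ _), Finset.card_univ, Fintype.card_fin,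
      Nat.cast_pred (Nat.pos_of_neZero d)]
  · rw [← hb0]
    exact b.orthonormal.2 (Finset.ne_of_mem_erase hi).symm
  · have hparseval := b.sum_sq_inner_right x
    rw [← Finset.add_sum_erase _ _ (Finset.mem_univ 0), hb0, hx.1, hx.2, one_pow] at hparseval
    linarith

lemma sub_one_mul_integral_inner_sq (hμ : IsUniformOnSlice v ξ μ) (hv : ‖v‖ = 1)
    {w : EuclideanSpace ℝ (Fin d)} (hw : ‖w‖ = 1) (hvw : ⟪v, w⟫ = 0) :
    ((d : ℝ) - 1) * ∫ x, ⟪w, x⟫ ^ 2 ∂μ = 1 - ξ ^ 2 := by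
  have := hμ.1
  obtain ⟨b, A, hA, hbv, hsum⟩ := hμ.exists_orthonormalBasis_sum_inner_sq hv
  calc ((d : ℝ) - 1) * ∫ x, ⟪w, x⟫ ^ 2 ∂μ = ∑ i ∈ A, ∫ x, ⟪b i, x⟫ ^ 2 ∂μ := by
        rw [Finset.sum_congr rfl fun i hi ↦ hμ.integral_inner_pow hw hvw (hbv i hi) 2]
        simp [b.orthonormal.1, hA]
    _ = ∫ x, ∑ i ∈ A, ⟪b i, x⟫ ^ 2 ∂μ :=
        (integral_finsetSum A fun i _ ↦ hμ.integrable (by fun_prop)).symm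
    _ = 1 - ξ ^ 2 := by simp [integral_congr_ae hsum]

lemma sub_one_mul_add_one_mul_integral_inner_pow_four (hμ : IsUniformOnSlice v ξ μ)
    (hv : ‖v‖ = 1) {w : EuclideanSpace ℝ (Fin d)} (hw : ‖w‖ = 1) (hvw : ⟪v, w⟫ = 0) :
    ((d : ℝ) - 1) * ((d : ℝ) + 1) * ∫ x, ⟪w, x⟫ ^ 4 ∂μ = 3 * (1 - ξ ^ 2) ^ 2 := by
  have := hμ.1
  obtain ⟨b, A, hA, hbv, hsum⟩ := hμ.exists_orthonormalBasis_sum_inner_sq hv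
  set m₄ := ∫ x, ⟪w, x⟫ ^ 4 ∂μ
  have hpair : ∀ i ∈ A, ∀ j ∈ A,
      ∫ x, ⟪b i, x⟫ ^ 2 * ⟪b j, x⟫ ^ 2 ∂μ = m₄ / 3 + if i = j then 2 * m₄ / 3 else 0 := by
    intro i hi j hj
    split_ifs with hij
    · subst hij
      simp_rw [← pow_add]
      rw [hμ.integral_inner_pow hw hvw (hbv i hi), b.orthonormal.1]
      ring
    · have := hμ.three_mul_integral_sq_mul_sq hw hvw (b.orthonormal.1 i) (b.orthonormal.1 j)
        (b.orthonormal.2 hij) (hbv i hi) (hbv j hj)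
      linarith
  calc ((d : ℝ) - 1) * ((d : ℝ) + 1) * m₄
      = 3 * ∑ i ∈ A, ∑ j ∈ A, ∫ x, ⟪b i, x⟫ ^ 2 * ⟪b j, x⟫ ^ 2 ∂μ := by
        rw [Finset.sum_congr rfl fun i hi ↦ Finset.sum_congr rfl (hpair i hi)]
        simp only [Finset.sum_add_distrib, Finset.sum_ite_eq, Finset.sum_ite_mem,
          Finset.inter_self, Finset.sum_const, nsmul_eq_mul, hA]
        ring
    _ = 3 * ∫ x, (∑ i ∈ A, ⟪b i, x⟫ ^ 2) ^ 2 ∂μ := by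
        simp_rw [sq (Finset.sum _ _), Finset.sum_mul_sum]
        rw [integral_finsetSum A fun i _ ↦ integrable_finsetSum A fun j _ ↦
          hμ.integrable (by fun_prop)]
        congr 1
        exact Finset.sum_congr rfl fun i _ ↦ (integral_finsetSum A fun j _ ↦
          hμ.integrable (F := fun x ↦ ⟪b i, x⟫ ^ 2 * ⟪b j, x⟫ ^ 2) (by fun_prop)).symm
    _ = 3 * (1 - ξ ^ 2) ^ 2 := by
        simp [integral_congr_ae (hsum.mono fun x hx ↦ congrArg (· ^ 2) hx)]

lemma pi_div_six_sqrt_le_integral_abs_inner (hμ : IsUniformOnSlice v ξ μ) (hd : 4 ≤ d)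
    (hv : ‖v‖ = 1) {w : EuclideanSpace ℝ (Fin d)} (hw : ‖w‖ = 1) (hvw : ⟪v, w⟫ = 0)
    (hξ : ξ ^ 2 * d ≤ 1) :
    π / (6 * √d) ≤ ∫ x, |⟪w, x⟫| ∂μ := by
  have hD : (4 : ℝ) ≤ d := by exact_mod_cast hd
  have hr : 0 < √d := by positivity
  have hrr : √d ^ 2 = d := Real.sq_sqrt (by positivity)
  have hsr : 2 / √d * √d = 2 := div_mul_cancel₀ 2 hr.ne'
  -- `s = 2 / √d` is close to the optimal choice `s = √(m₄ / m₂)`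
  have hmix := three_mul_sq_mul_integral_sq_le (μ := μ) (Z := fun x ↦ ⟪w, x⟫)
    (hμ.integrable (by fun_prop)) (hμ.integrable (by fun_prop)) (hμ.integrable (by fun_prop))
    (s := 2 / √d) (by positivity)
  have h₂ := hμ.sub_one_mul_integral_inner_sq hv hw hvw
  have h₄ := hμ.sub_one_mul_add_one_mul_integral_inner_pow_four hv hw hvw
  generalize ∫ x, ⟪w, x⟫ ^ 2 ∂μ = m₂, ∫ x, ⟪w, x⟫ ^ 4 ∂μ = m₄, ∫ x, |⟪w, x⟫| ∂μ = L,
    √d = r at *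
  generalize 2 / r = s at hmix hsr
  have hmix' : 12 * m₂ - m₄ * d ≤ 8 * s * L := by
    have hsd : s ^ 2 * d = 4 := by rw [← hrr, ← mul_pow, hsr]; norm_num
    linear_combination (d : ℝ) * hmix + (2 * s * L - 3 * m₂) * hsd
  have hmoments : 8 * π ≤ 3 * d * (12 * m₂ - m₄ * d) := by
    have hprod : ((d : ℝ) - 1) * (d + 1) * (3 * d * (12 * m₂ - m₄ * d))
        = 9 * d * (4 * (1 - ξ ^ 2) * (d + 1) - (1 - ξ ^ 2) ^ 2 * d) := by
      linear_combination (36 * (d : ℝ) * (d + 1)) * h₂ - (3 * (d : ℝ) ^ 2) * h₄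
    have hpoly : ((d : ℝ) - 1) * (d + 1) * (8 * π)
        ≤ 9 * d * (4 * (1 - ξ ^ 2) * (d + 1) - (1 - ξ ^ 2) ^ 2 * d) := by
      have hξ₀ : 0 ≤ ξ ^ 2 * d := by positivity
      nlinarith [mul_le_mul_of_nonneg_right hξ (by positivity : (0 : ℝ) ≤ d),
        mul_le_mul hξ hξ hξ₀ zero_le_one, pi_pos,
        mul_le_mul_of_nonneg_right pi_lt_d2.le (sq_nonneg (d : ℝ)),
        mul_le_mul_of_nonneg_right hD (by positivity : (0 : ℝ) ≤ d)]
    exact le_of_mul_le_mul_left (hprod ▸ hpoly) (by nlinarith)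
  have hL : 3 * d * (8 * s * L) = 48 * r * L := by
    rw [← hrr]; linear_combination (24 * r * L) * hsr
  have h3d := mul_le_mul_of_nonneg_left hmix' (by positivity : (0 : ℝ) ≤ 3 * d)
  rw [div_le_iff₀ (by positivity)]
  linarith

lemma min_mul_add_mul_le {c ξ s z : ℝ} (hc : c ≤ 1) (hξ : 0 ≤ ξ) :
    min (c * ξ + s * z) 0 ≤ ξ + s * min z 0 := by
  rcases le_total z 0 with hz | hz
  · rw [min_eq_left hz]
    nlinarith [min_le_left (c * ξ + s * z) 0]
  · rw [min_eq_right hz]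
    linarith [min_le_right (c * ξ + s * z) 0]

lemma integral_min_inner_le (hμ : IsUniformOnSlice v ξ μ) {u w : EuclideanSpace ℝ (Fin d)}
    {c s : ℝ} (hc : c ≤ 1) (hξ : 0 ≤ ξ) (hvw : ⟪v, w⟫ = 0) (hu : u = c • v + s • w) :
    ∫ x, min ⟪u, x⟫ 0 ∂μ ≤ ξ - s * (∫ x, |⟪w, x⟫| ∂μ) / 2 := by
  have := hμ.1
  calc ∫ x, min ⟪u, x⟫ 0 ∂μ ≤ ∫ x, (ξ + s * min ⟪w, x⟫ 0) ∂μ := by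
        refine integral_mono_ae (hμ.integrable (by fun_prop)) (hμ.integrable (by fun_prop)) ?_
        filter_upwards [hμ.ae_mem] with x hx
        rw [hu, inner_add_left, real_inner_smul_left, real_inner_smul_left, hx.2]
        exact min_mul_add_mul_le hc hξ
    _ = ξ - s * (∫ x, |⟪w, x⟫| ∂μ) / 2 := by
        rw [integral_add (integrable_const ξ) ((hμ.integrable (by fun_prop)).const_mul s),
          integral_const_mul, hμ.integral_min_inner_zero hvw, integral_const, smul_eq_mul,
          probReal_univ, one_mul]
        ring

end IsUniformOnSlice

theorem stmt_14 (d : ℕ) (hd : 4 ≤ d)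
    (u v : EuclideanSpace ℝ (Fin d)) (hu : ‖u‖ = 1) (hv : ‖v‖ = 1)
    (θ : ℝ) (hθ : θ = Real.arccos ⟪u, v⟫) (hθub : θ ≤ 9 * Real.pi / 10)
    (ξ : ℝ) (hξ0 : 0 ≤ ξ) (hξ : ξ ≤ θ / (4 * Real.sqrt d))
    (μ : Measure (EuclideanSpace ℝ (Fin d))) (hμ : IsUniformOnSlice v ξ μ) :
    ∫ x, (if ⟪u, x⟫ < 0 then ⟪u, x⟫ else 0) ∂μ ≤ ξ - θ / (36 * Real.sqrt d) := by
  obtain ⟨w, hw, hvw, hdecomp⟩ := exists_eq_inner_smul_add_sqrt_smul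
    (by simpa using (show 2 ≤ 4 by norm_num).trans hd) hu hv
  have huv := abs_le.1 (abs_real_inner_le_norm u v)
  rw [hu, hv, one_mul] at huv
  rw [← sin_arccos, ← hθ, ← cos_arccos huv.1 huv.2, ← hθ] at hdecomp
  have hθ₀ : 0 ≤ θ := hθ ▸ arccos_nonneg _
  have hξd : ξ ^ 2 * d ≤ 1 := by
    have hξr : ξ * √d ≤ 1 := by
      rw [le_div_iff₀ (by positivity)] at hξ
      linarith [pi_lt_four]
    calc ξ ^ 2 * d = (ξ * √d) ^ 2 := by rw [mul_pow, Real.sq_sqrt (by positivity)]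
      _ ≤ 1 := pow_le_one₀ (by positivity) hξr
  have hL := hμ.pi_div_six_sqrt_le_integral_abs_inner hd hv hw hvw hξd
  calc ∫ x, (if ⟪u, x⟫ < 0 then ⟪u, x⟫ else 0) ∂μ = ∫ x, min ⟪u, x⟫ 0 ∂μ := by
        congr with x
        split_ifs with h
        exacts [(min_eq_left h.le).symm, (min_eq_right (not_lt.1 h)).symm]
    _ ≤ ξ - sin θ * (∫ x, |⟪w, x⟫| ∂μ) / 2 :=
        hμ.integral_min_inner_le (cos_le_one θ) hξ0 hvw hdecomp
    _ ≤ ξ - θ / (3 * π) * (π / (6 * √d)) / 2 := by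
        have hsin := div_three_pi_mul_le_sin hθ₀ hθub
        gcongr
        exact (by positivity : 0 ≤ θ / (3 * π)).trans hsin
    _ = ξ - θ / (36 * √d) := by
        field_simp
        ring
end
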